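/- Let Y/X be an abelian cover of multigraphs with automorphism group G. Then (−2)^{r_X − 1} · det_{Z[G]}(φ) = θ*_{Y/X}(1) · e in Z[G], where e = 1 − e_{χ_1}, det_{Z[G]}(φ) is the determinant of the Z[G]-linear Laplacian φ on the free Z[G]-module Div(Y), and r_X = |E_X| − |V_X| + 1. -/

import Mathlib

/-!  Multigraphs in the Serre formalism: a finite vertex set `V`, a finite set
`D` of darts (oriented edges / half-edges) together with a fixed-point-free
involution `inv` (reversing orientation) and a map `head` assigning to each
dart its terminal vertex.  Edges are the orbits of `inv`; loops and multiple
edges are allowed.  -/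
structure Multigraph where
  V : Type
  D : Type
  [fintypeV : Fintype V]
  [fintypeD : Fintype D]
  [decEqV : DecidableEq V]
  [decEqD : DecidableEq D]
  inv : D → D
  head : D → V
  inv_inv : ∀ d, inv (inv d) = d
  inv_ne : ∀ d, inv d ≠ d

namespace Multigraph

attribute [instance] Multigraph.fintypeV Multigraph.fintypeD Multigraph.decEqV Multigraph.decEqD

variable (Z : Multigraph)

/-- the initial vertex of a dart -/
def tail (d : Z.D) : Z.V := Z.head (Z.inv d)

/-- the number of edges `|E|`: each edge consists of exactly two darts -/
def numEdges : ℕ := Fintype.card Z.D / 2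

/-- the degree (valency) of a vertex: the number of darts with head `v`;
loops automatically count twice -/
def degree (v : Z.V) : ℕ := (Finset.univ.filter fun d : Z.D => Z.head d = v).card

/-- the number of darts with tail `v` and head `w`.  For `v ≠ w` this is the
number of edges joining `v` and `w`; for `v = w` it is twice the number of
loops at `v`. -/
def numDarts (v w : Z.V) : ℕ :=
  (Finset.univ.filter fun d : Z.D => Z.tail d = v ∧ Z.head d = w).card

/-- the number of loops at a vertex -/
def numLoops (v : Z.V) : ℕ := Z.numDarts v v / 2

/-- the number of edges between two (distinct) vertices -/
def numEdgesBetween (v w : Z.V) : ℕ := Z.numDarts v w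

def Adj (v w : Z.V) : Prop := ∃ d : Z.D, Z.tail d = v ∧ Z.head d = w

/-- a multigraph is connected if it is nonempty and any two vertices are
joined by a path -/
def Connected : Prop := Nonempty Z.V ∧ ∀ v w : Z.V, Relation.ReflTransGen Z.Adj v w

/-- no vertices of degree one -/
def NoDegreeOne : Prop := ∀ v : Z.V, Z.degree v ≠ 1

/-- adjacency using only darts from `T` -/
def AdjOn (T : Finset Z.D) (v w : Z.V) : Prop := ∃ d ∈ T, Z.tail d = v ∧ Z.head d = w

/-- A spanning tree, described by its (inv-closed) set of darts: it is
connected, spans all vertices, and has `|V| - 1` edges (i.e. `2(|V|-1)`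
darts); a connected spanning subgraph with `|V| - 1` edges is exactly a
spanning tree. -/
def IsSpanningTree (T : Finset Z.D) : Prop :=
  (∀ d ∈ T, Z.inv d ∈ T) ∧ (∀ v w : Z.V, Relation.ReflTransGen (Z.AdjOn T) v w) ∧
    T.card = 2 * (Fintype.card Z.V - 1)

/-- `κ_Z`, the number of spanning trees of `Z` -/
noncomputable def kappa : ℕ := Nat.card {T : Finset Z.D // Z.IsSpanningTree T}

/-- the adjacency matrix: the diagonal entry at `v` is twice the number of
loops at `v`, the off-diagonal entry at `(v, w)` is the number of edges
joining `v` and `w` -/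
def adjMatrix : Matrix Z.V Z.V ℤ := Matrix.of fun v w => (Z.numDarts v w : ℤ)

/-- the diagonal degree matrix -/
def degMatrix : Matrix Z.V Z.V ℤ := Matrix.diagonal fun v => (Z.degree v : ℤ)

/-- `r_Z = |E_Z| - |V_Z| + 1` -/
def r : ℕ := Z.numEdges + 1 - Fintype.card Z.V

/-- the reciprocal `ζ_Z(u)⁻¹` of the Ihara zeta function, defined through the
three-term determinant formula
`ζ_Z(u)⁻¹ = (1 - u²)^(r-1) · det (I - A u + (D - I) u²)`;
it is a polynomial in `u`. -/
noncomputable def zetaInv : Polynomial ℚ :=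
  (1 - Polynomial.X ^ 2) ^ (Z.r - 1) *
    Matrix.det
      ((1 : Matrix Z.V Z.V (Polynomial ℚ)) -
        (Polynomial.X : Polynomial ℚ) • Z.adjMatrix.map (fun a => (a : Polynomial ℚ)) +
        ((Polynomial.X : Polynomial ℚ) ^ 2) • (Z.degMatrix - 1).map (fun a => (a : Polynomial ℚ)))

/-- `ρ_w(w₀)`: the Laplacian entries -/
def rho (w w0 : Z.V) : ℤ :=
  if w = w0 then (Z.degree w0 : ℤ) - 2 * (Z.numLoops w0 : ℤ)
  else -(Z.numEdgesBetween w w0 : ℤ)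

/-- the divisor `φ(w₀) = ∑_w ρ_w(w₀) · w` -/
noncomputable def lapDiv (w0 : Z.V) : Z.V →₀ ℤ :=
  ∑ w : Z.V, Finsupp.single w (Z.rho w w0)

/-- the Laplacian map `φ : Div(Z) → Div(Z)`, on `Div(Z) = Z.V →₀ ℤ`,
sending `w₀` to `∑_w ρ_w(w₀) · w` -/
noncomputable def lap : (Z.V →₀ ℤ) →ₗ[ℤ] Z.V →₀ ℤ :=
  Finsupp.lsum ℤ fun w0 => LinearMap.toSpanSingleton ℤ _ (Z.lapDiv w0)

/-- the degree map `deg : Div(Z) → ℤ` -/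
noncomputable def divDeg : (Z.V →₀ ℤ) →ₗ[ℤ] ℤ :=
  Finsupp.lsum ℤ fun _ => (LinearMap.id : ℤ →ₗ[ℤ] ℤ)

/-- `Div⁰(Z)`, the divisors of degree zero -/
noncomputable def divZero : Submodule ℤ (Z.V →₀ ℤ) := LinearMap.ker Z.divDeg

/-- `Pr(Z)`, the principal divisors: the image of the Laplacian map -/
noncomputable def prin : Submodule ℤ (Z.V →₀ ℤ) := LinearMap.range Z.lap

end Multigraph

/-- A covering map of multigraphs: maps on vertices and darts commuting with
the structure maps which are local isomorphisms (bijections on stars). -/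
structure CoveringMap (Y X : Multigraph) where
  vmap : Y.V → X.V
  dmap : Y.D → X.D
  head_map : ∀ d, X.head (dmap d) = vmap (Y.head d)
  inv_map : ∀ d, X.inv (dmap d) = dmap (Y.inv d)
  vmap_surj : Function.Surjective vmap
  star_bij : ∀ w : Y.V, Set.BijOn dmap {d | Y.head d = w} {d | X.head d = vmap w}

/-- A Galois (regular) cover of multigraphs `Y/X` with automorphism group `G`:
a covering map together with an action of `G` on `Y` by automorphisms of the
cover which is free and transitive on each vertex fiber (so `G` is identified
with the deck transformation group `Aut(Y/X)`). -/
structure GaloisCover (Y X : Multigraph) (G : Type) [Group G] extends CoveringMap Y X where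
  actV : G →* Equiv.Perm Y.V
  actD : G →* Equiv.Perm Y.D
  act_head : ∀ g d, Y.head (actD g d) = actV g (Y.head d)
  act_inv : ∀ g d, Y.inv (actD g d) = actD g (Y.inv d)
  vmap_act : ∀ g w, vmap (actV g w) = vmap w
  dmap_act : ∀ g d, dmap (actD g d) = dmap d
  act_free : ∀ g w, actV g w = w → g = 1
  fiber_trans : ∀ w w' : Y.V, vmap w = vmap w' → ∃ g : G, actV g w = w'

/-- the first non-vanishing Taylor coefficient of a polynomial `p` at `u = 1` -/
noncomputable def leadingCoeffAtOne {K : Type} [Field K] (p : Polynomial K) : K :=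
  (Polynomial.taylor 1 p).coeff (p.rootMultiplicity 1)

/-- the idempotent `e_χ = |G|⁻¹ ∑_σ χ(σ) σ⁻¹` of `ℂ[G]` attached to a
character `χ` of a finite abelian group `G` -/
noncomputable def charIdem {G : Type} [CommGroup G] [Fintype G] (χ : G →* ℂ) :
    MonoidAlgebra ℂ G :=
  (Fintype.card G : ℂ)⁻¹ • ∑ σ : G, χ σ • MonoidAlgebra.single σ⁻¹ (1 : ℂ)

/-- the complex-conjugate character `χ̄` -/
noncomputable def conjChar {G : Type} [CommGroup G] (χ : G →* ℂ) : G →* ℂ :=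
  (starRingEnd ℂ).toMonoidHom.comp χ

/-- `e = 1 - e_{χ₁}` where `χ₁` is the trivial character -/
noncomputable def eAug (G : Type) [CommGroup G] [Fintype G] : MonoidAlgebra ℂ G :=
  1 - charIdem (1 : G →* ℂ)

/-- the augmentation ideal `I_G = ker(s : ℤ[G] → ℤ)`, as an additive
subgroup of `ℤ[G]` -/
noncomputable def augIdeal (G : Type) [CommGroup G] : AddSubgroup (MonoidAlgebra ℤ G) :=
  AddMonoidHom.ker
    (((Finsupp.lsum ℤ fun _ : G => (LinearMap.id : ℤ →ₗ[ℤ] ℤ)).toAddMonoidHom.comp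
      (MonoidAlgebra.coeffAddEquiv : MonoidAlgebra ℤ G ≃+ (G →₀ ℤ)).toAddMonoidHom :
      MonoidAlgebra ℤ G →+ ℤ))

namespace GaloisCover

variable {Y X : Multigraph} {G : Type} [CommGroup G] [Fintype G] (C : GaloisCover Y X G)

/-- the matrix `A(σ)`, relative to a choice `s` of one vertex `s v` of `Y` in
the fiber of each vertex `v` of `X`: its `(v, v')` entry is twice the number
of loops at `s v` when `v = v'` and `σ = 1`, and otherwise the number of
edges connecting `s v` to `σ · s v'`. -/
noncomputable def Asigma (s : X.V → Y.V) (σ : G) : Matrix X.V X.V ℤ :=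
  Matrix.of fun v v' => (Y.numDarts (s v) (C.actV σ (s v')) : ℤ)

/-- `A_χ = ∑_σ χ(σ) A(σ)` -/
noncomputable def Achi (s : X.V → Y.V) (χ : G →* ℂ) : Matrix X.V X.V ℂ :=
  ∑ σ : G, χ σ • (C.Asigma s σ).map fun a => (a : ℂ)

/-- the reciprocal `L_{Y/X}(u,χ)⁻¹` of the Artin-Ihara L-function, defined
through the three-term determinant formula
`L_{Y/X}(u,χ)⁻¹ = (1 - u²)^(r_X - 1) · det (I - A_χ u + (D - I) u²)`. -/
noncomputable def LInv (s : X.V → Y.V) (χ : G →* ℂ) : Polynomial ℂ :=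
  (1 - Polynomial.X ^ 2) ^ (X.r - 1) *
    Matrix.det
      ((1 : Matrix X.V X.V (Polynomial ℂ)) -
        (Polynomial.X : Polynomial ℂ) • (C.Achi s χ).map Polynomial.C +
        ((Polynomial.X : Polynomial ℂ) ^ 2) • (X.degMatrix - 1).map fun a => (a : Polynomial ℂ))

/-- `θ*_{Y/X}(1) = ∑_χ L*_{Y/X}(1,χ) e_{χ̄} ∈ ℂ[G]` (a finite sum over all
the characters of `G`) -/
noncomputable def thetaStar (s : X.V → Y.V) : MonoidAlgebra ℂ G :=
  ∑ᶠ χ : G →* ℂ, leadingCoeffAtOne (C.LInv s χ) • charIdem (conjChar χ)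

/-- `ℓ_{w_i} : Div(Y) → ℤ[G]`, on a vertex `w`: `∑_σ ρ_{w_i}(σ·w) σ⁻¹`
(here `w_i = s v`) -/
noncomputable def ell (s : X.V → Y.V) (v : X.V) (w : Y.V) : MonoidAlgebra ℤ G :=
  ∑ σ : G, Y.rho (s v) (C.actV σ w) • MonoidAlgebra.single (σ⁻¹ : G) (1 : ℤ)

/-- the `ℤ[G]`-linear extension of `ell` to `Div(Y)` -/
noncomputable def ellD (s : X.V → Y.V) (v : X.V) (Dv : Y.V →₀ ℤ) : MonoidAlgebra ℤ G :=
  Finsupp.sum Dv fun w c => c • C.ell s v w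

/-- `det_{ℤ[G]}(φ)`: the determinant of the `ℤ[G]`-linear Laplacian `φ` on the
free `ℤ[G]`-module `Div(Y) = ⊕ᵢ ℤ[G]·wᵢ`, computed in the basis `(wᵢ)ᵢ`,
i.e. the determinant of the matrix `(ℓ_{w_i}(w_j))_{i,j}`. -/
noncomputable def lapDet (s : X.V → Y.V) : MonoidAlgebra ℤ G :=
  Matrix.det (Matrix.of fun v v' => C.ell s v (s v'))

/-- the action of an element of `ℤ[G]` on `Div(Y)` -/
noncomputable def smulDiv (x : MonoidAlgebra ℤ G) (Dv : Y.V →₀ ℤ) : Y.V →₀ ℤ :=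
  Finsupp.sum x.coeff fun σ c => c • Finsupp.mapDomain (C.actV σ) Dv

/-- the action of an element of `ℂ[G]` on `Div(Y) ⊗ ℂ` -/
noncomputable def smulDivC (x : MonoidAlgebra ℂ G) (Dv : Y.V →₀ ℂ) : Y.V →₀ ℂ :=
  Finsupp.sum x.coeff fun σ c => c • Finsupp.mapDomain (C.actV σ) Dv

/-- `res : Div(Y) → Div(X)`, sending a vertex `w` to `π(w)` -/
noncomputable def res (Dv : Y.V →₀ ℤ) : X.V →₀ ℤ := Finsupp.mapDomain C.vmap Dv

/-- `cor : Div(X) → Div(Y)`, sending a vertex `v` to `∑_{w ∈ π⁻¹(v)} w` -/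
noncomputable def cor (Dv : X.V →₀ ℤ) : Y.V →₀ ℤ :=
  Finsupp.equivFunOnFinite.symm fun w => Dv (C.vmap w)

/-- the norm element `N_G = ∑_σ σ` acting on `Div(Y)` -/
noncomputable def normMap : (Y.V →₀ ℤ) →ₗ[ℤ] Y.V →₀ ℤ :=
  ∑ σ : G, Finsupp.lmapDomain ℤ ℤ (C.actV σ)

end GaloisCover

/-- An intermediate cover of a Galois cover `Y/X`, corresponding to a subgroup
`H ≤ G = Aut(Y/X)`: a multigraph `Z` (the quotient `Y/H`) which is at the
same time a Galois cover of which `Y` is a Galois `H`-cover (with the action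
of `H` being the restriction of that of `G`) and a cover of `X`, compatibly
with the covering `Y → X`. -/
structure IntermediateCover {Y X : Multigraph} {G : Type} [Group G]
    (C : GaloisCover Y X G) (H : Subgroup G) where
  Z : Multigraph
  upper : GaloisCover Y Z ↥H
  lower : CoveringMap Z X
  actV_compat : ∀ (h : ↥H) (w : Y.V), upper.actV h w = C.actV (h : G) w
  actD_compat : ∀ (h : ↥H) (d : Y.D), upper.actD h d = C.actD (h : G) d
  vmap_compat : ∀ w : Y.V, lower.vmap (upper.vmap w) = C.vmap w
  dmap_compat : ∀ d : Y.D, lower.dmap (upper.dmap d) = C.dmap d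

/-!
Both sides are compared through their images under every character `ψ` of `G`, which determine
an element of `ℂ[G]` by Fourier inversion. Under `ψ`, the matrix of `φ` in the basis `(wᵢ)`
becomes the twisted Laplacian `D - A_ψ̄` of `X`, and `θ*(1) · e` becomes `L*(1, ψ̄)` for `ψ ≠ 1`
and `0` for `ψ = 1`.

For `ψ = 1` the rows of `D - A_{χ₁}` sum to zero, so both sides vanish. For `ψ ≠ 1`, a kernel
vector of `D - A_ψ̄` lifts to a `ψ̄`-equivariant harmonic function on `Y`; its Dirichlet energy
vanishes, so it is constant on the connected graph `Y`, hence zero as `ψ̄` is nontrivial. Thus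
`det (D - A_ψ̄) ≠ 0`, and since `L(u, ψ̄)⁻¹ = (1 - u²)^(r_X - 1) · det (I - A_ψ̄ u + (D - I) u²)`
with the determinant equal to `det (D - A_ψ̄)` at `u = 1`, the leading coefficient at `u = 1`
is `(-2)^(r_X - 1) · det (D - A_ψ̄)`.
-/

lemma Function.Involutive.even_card_of_forall_ne {α : Type} [Fintype α] [DecidableEq α]
    {f : α → α} (hf : Function.Involutive f) (hfree : ∀ a, f a ≠ a) : Even (Fintype.card α) := by
  have hmod := Equiv.Perm.card_fixedPoints_modEq (p := 2) (n := 1) (f := (f : Function.End α))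
    (by funext a; exact hf a)
  have hfix : Fintype.card (Function.fixedPoints (f : Function.End α)) = 0 :=
    Fintype.card_eq_zero_iff.mpr ⟨fun a => hfree a.1 a.2⟩
  rw [hfix] at hmod
  exact Nat.even_iff.mpr hmod

namespace Multigraph

variable (Z : Multigraph)

@[simp]
lemma tail_inv (d : Z.D) : Z.tail (Z.inv d) = Z.head d := by
  rw [tail, Z.inv_inv]

@[simp]
lemma head_inv (d : Z.D) : Z.head (Z.inv d) = Z.tail d := rfl

lemma sum_tail_head_swap {M : Type} [AddCommMonoid M] (F : Z.V → Z.V → M) :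
    ∑ d, F (Z.tail d) (Z.head d) = ∑ d, F (Z.head d) (Z.tail d) :=
  Fintype.sum_equiv ⟨Z.inv, Z.inv, Z.inv_inv, Z.inv_inv⟩ _ _ fun d => by simp

lemma even_numDarts_self (v : Z.V) : Even (Z.numDarts v v) := by
  let loops := {d : Z.D // Z.tail d = v ∧ Z.head d = v}
  have hinv : Function.Involutive fun d : loops => (⟨Z.inv d.1, by simp [d.2.1, d.2.2]⟩ : loops) :=
    fun d => Subtype.ext (Z.inv_inv d.1)
  have := hinv.even_card_of_forall_ne fun d h => Z.inv_ne d.1 (congrArg Subtype.val h)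
  rwa [Fintype.card_subtype] at this

lemma rho_eq (w w' : Z.V) :
    Z.rho w w' = (if w = w' then (Z.degree w : ℤ) else 0) - Z.numDarts w w' := by
  unfold rho numEdgesBetween
  split_ifs with h
  · subst h
    have := Nat.two_mul_div_two_of_even (Z.even_numDarts_self w)
    rw [numLoops]
    omega
  · simp

open Finset in
lemma card_filter_tail_eq (w : Z.V) : #{d | Z.tail d = w} = Z.degree w :=
  card_equiv ⟨Z.inv, Z.inv, Z.inv_inv, Z.inv_inv⟩ fun d => by simp

lemma sum_numDarts_smul {M : Type} [AddCommMonoid M] (w : Z.V) (F : Z.V → M) :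
    ∑ w', Z.numDarts w w' • F w' = ∑ d with Z.tail d = w, F (Z.head d) := by
  rw [← Finset.sum_fiberwise _ Z.head]
  refine Fintype.sum_congr _ _ fun w' => ?_
  rw [Finset.sum_congr rfl fun d hd => by rw [(Finset.mem_filter.mp hd).2], Finset.sum_const,
    Finset.filter_filter, numDarts]

lemma sum_rho_mul {R : Type} [CommRing R] (f : Z.V → R) (w : Z.V) :
    ∑ w', (Z.rho w w' : R) * f w' = ∑ d with Z.tail d = w, (f w - f (Z.head d)) := by
  have hdarts := Z.sum_numDarts_smul w f
  simp only [nsmul_eq_mul] at hdarts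
  simp only [rho_eq, Int.cast_sub, Int.cast_ite, Int.cast_natCast, Int.cast_zero, sub_mul,
    ite_mul, zero_mul, Finset.sum_sub_distrib, Finset.sum_ite_eq, Finset.mem_univ, if_true,
    hdarts, Finset.sum_const, nsmul_eq_mul, card_filter_tail_eq]

lemma sum_rho (w : Z.V) : ∑ w', Z.rho w w' = 0 := by
  simpa using Z.sum_rho_mul (fun _ => (1 : ℤ)) w

variable {Z}

lemma eq_of_sum_rho_mul_eq_zero (hZ : Z.Connected) {f : Z.V → ℂ}
    (hf : ∀ w, ∑ w', (Z.rho w w' : ℂ) * f w' = 0) (w w' : Z.V) : f w = f w' := by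
  have htail : ∑ d, starRingEnd ℂ (f (Z.tail d)) * (f (Z.tail d) - f (Z.head d)) = 0 := by
    rw [← Finset.sum_fiberwise _ Z.tail]
    refine Fintype.sum_eq_zero _ fun v => ?_
    rw [Finset.sum_congr rfl fun d hd => by rw [(Finset.mem_filter.mp hd).2], ← Finset.mul_sum,
      ← Z.sum_rho_mul, hf, mul_zero]
  have hhead : ∑ d, starRingEnd ℂ (f (Z.head d)) * (f (Z.head d) - f (Z.tail d)) = 0 := by
    rwa [← Z.sum_tail_head_swap fun a b => starRingEnd ℂ (f a) * (f a - f b)]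
  have henergy : ∑ d, Complex.normSq (f (Z.head d) - f (Z.tail d)) = 0 := by
    refine Complex.ofReal_injective ?_
    calc ((∑ d, Complex.normSq (f (Z.head d) - f (Z.tail d)) : ℝ) : ℂ)
        = ∑ d, (starRingEnd ℂ (f (Z.head d)) * (f (Z.head d) - f (Z.tail d)) +
            starRingEnd ℂ (f (Z.tail d)) * (f (Z.tail d) - f (Z.head d))) := by
          push_cast
          refine Finset.sum_congr rfl fun d _ => ?_
          rw [Complex.normSq_eq_conj_mul_self, map_sub]
          ring
      _ = ((0 : ℝ) : ℂ) := by rw [Finset.sum_add_distrib, hhead, htail, add_zero,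
          Complex.ofReal_zero]
  have hdart (d : Z.D) : f (Z.tail d) = f (Z.head d) := by
    have := (Finset.sum_eq_zero_iff_of_nonneg fun d _ => Complex.normSq_nonneg _).mp henergy d
      (Finset.mem_univ d)
    exact (sub_eq_zero.mp (Complex.normSq_eq_zero.mp this)).symm
  induction hZ.2 w w' with
  | refl => rfl
  | tail _ hadj ih =>
    obtain ⟨d, rfl, rfl⟩ := hadj
    exact ih.trans (hdart d)

end Multigraph

lemma CoveringMap.degree_eq {Y X : Multigraph} (c : CoveringMap Y X) (w : Y.V) :
    Y.degree w = X.degree (c.vmap w) :=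
  Set.BijOn.finsetCard_eq c.dmap (by simpa using c.star_bij w)

namespace GaloisCover

variable {Y X : Multigraph} {G : Type} [Group G] (C : GaloisCover Y X G)

lemma act_tail (σ : G) (d : Y.D) : Y.tail (C.actD σ d) = C.actV σ (Y.tail d) := by
  rw [Multigraph.tail, C.act_inv, C.act_head]
  rfl

lemma numDarts_act (σ : G) (w w' : Y.V) :
    Y.numDarts (C.actV σ w) (C.actV σ w') = Y.numDarts w w' :=
  (Finset.card_equiv (C.actD σ) fun d => by simp [act_tail, act_head]).symm

lemma degree_act (σ : G) (w : Y.V) : Y.degree (C.actV σ w) = Y.degree w := by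
  rw [C.degree_eq, C.vmap_act, ← C.degree_eq]

lemma rho_act (σ : G) (w w' : Y.V) : Y.rho (C.actV σ w) (C.actV σ w') = Y.rho w w' := by
  simp [Multigraph.rho_eq, numDarts_act, degree_act]

variable {s : X.V → Y.V}

noncomputable def fiberEquiv (hs : ∀ v, C.vmap (s v) = v) : X.V × G ≃ Y.V :=
  Equiv.ofBijective (fun p => C.actV p.2 (s p.1)) <| by
    refine ⟨fun ⟨v, σ⟩ ⟨v', σ'⟩ h => ?_, fun w => ?_⟩
    · dsimp only at h
      have hv : v = v' := by simpa [C.vmap_act, hs] using congrArg C.vmap h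
      subst hv
      have hσ : C.actV (σ'⁻¹ * σ) (s v) = s v := by
        rw [map_mul, map_inv, Equiv.Perm.mul_apply, h]
        simp
      simpa [inv_mul_eq_one, eq_comm] using C.act_free _ _ hσ
    · obtain ⟨σ, hσ⟩ := C.fiber_trans (s (C.vmap w)) w (hs _)
      exact ⟨(C.vmap w, σ), hσ⟩

@[simp]
lemma fiberEquiv_apply (hs : ∀ v, C.vmap (s v) = v) (v : X.V) (σ : G) :
    C.fiberEquiv hs (v, σ) = C.actV σ (s v) := rfl

lemma sum_actV_section {M : Type} [AddCommMonoid M] [Fintype G] (hs : ∀ v, C.vmap (s v) = v)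
    (F : Y.V → M) : ∑ v, ∑ σ : G, F (C.actV σ (s v)) = ∑ w, F w := by
  rw [← (C.fiberEquiv hs).sum_comp, Fintype.sum_prod_type]
  rfl

lemma section_eq_actV_section_iff (hs : ∀ v, C.vmap (s v) = v) {v v' : X.V} {σ : G} :
    s v = C.actV σ (s v') ↔ v = v' ∧ σ = 1 := by
  simpa [eq_comm] using (C.fiberEquiv hs).injective.eq_iff (a := (v, 1)) (b := (v', σ))

end GaloisCover

lemma MonoidHom.conj_apply_eq_apply_inv {G : Type} [Group G] [Fintype G] (ψ : G →* ℂ) (g : G) :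
    starRingEnd ℂ (ψ g) = ψ g⁻¹ := by
  have hψg : ‖ψ g‖ = 1 :=
    Complex.norm_eq_one_of_pow_eq_one (by rw [← map_pow, pow_card_eq_one, map_one])
      Fintype.card_ne_zero
  rw [← Complex.inv_eq_conj hψg, map_inv]

namespace MonoidHom

variable {G : Type} [CommGroup G] [Fintype G]

noncomputable instance : Fintype (G →* ℂ) :=
  Fintype.ofEquiv _ (AddChar.toAddMonoidHomEquiv.trans MonoidHom.toAdditive.symm :
    AddChar (Additive G) ℂ ≃ (G →* ℂ))

lemma sum_apply_eq_ite [DecidableEq G] (τ : G) :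
    ∑ ψ : G →* ℂ, ψ τ = if τ = 1 then (Fintype.card G : ℂ) else 0 := by
  rw [← Fintype.sum_equiv (AddChar.toAddMonoidHomEquiv.trans MonoidHom.toAdditive.symm)
    (fun φ => φ (Additive.ofMul τ)) (fun ψ => ψ τ) fun _ => rfl, AddChar.sum_apply_eq_ite]
  simp

end MonoidHom

namespace MonoidAlgebra

lemma lift_apply_eq_sum {G : Type} [Monoid G] [Fintype G] {k : Type} [CommSemiring k]
    [Algebra k ℂ] (ψ : G →* ℂ) (a : MonoidAlgebra k G) :
    lift k ℂ G ψ a = ∑ σ : G, algebraMap k ℂ (a.coeff σ) * ψ σ := by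
  rw [lift_apply, Finsupp.sum_fintype _ _ fun σ => by simp]
  exact Finset.sum_congr rfl fun σ _ => Algebra.smul_def _ _

variable {G : Type} [CommGroup G] [Fintype G]

lemma card_mul_algebraMap_coeff {k : Type} [CommSemiring k] [Algebra k ℂ]
    (a : MonoidAlgebra k G) (g : G) :
    (Fintype.card G : ℂ) * algebraMap k ℂ (a.coeff g) =
      ∑ ψ : G →* ℂ, lift k ℂ G ψ a * ψ g⁻¹ := by
  classical
  calc (Fintype.card G : ℂ) * algebraMap k ℂ (a.coeff g)
      = ∑ σ : G, algebraMap k ℂ (a.coeff σ) * ∑ ψ : G →* ℂ, ψ (σ * g⁻¹) := by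
        simp_rw [MonoidHom.sum_apply_eq_ite, mul_inv_eq_one, mul_ite, mul_zero,
          Finset.sum_ite_eq', Finset.mem_univ, if_true, mul_comm]
    _ = ∑ ψ : G →* ℂ, lift k ℂ G ψ a * ψ g⁻¹ := by
        simp_rw [lift_apply_eq_sum, Finset.mul_sum, Finset.sum_mul, map_mul, mul_assoc]
        exact Finset.sum_comm

lemma algebraMap_coeff_eq_of_forall_lift_eq {k k' : Type} [CommSemiring k] [Algebra k ℂ]
    [CommSemiring k'] [Algebra k' ℂ] {a : MonoidAlgebra k G} {b : MonoidAlgebra k' G}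
    (h : ∀ ψ : G →* ℂ, lift k ℂ G ψ a = lift k' ℂ G ψ b) (g : G) :
    algebraMap k ℂ (a.coeff g) = algebraMap k' ℂ (b.coeff g) := by
  have hcard : (Fintype.card G : ℂ) ≠ 0 := Nat.cast_ne_zero.mpr Fintype.card_ne_zero
  refine mul_left_cancel₀ hcard ?_
  simp_rw [card_mul_algebraMap_coeff, h]

end MonoidAlgebra

section Characters

variable {G : Type} [CommGroup G]

lemma conjChar_apply [Fintype G] (χ : G →* ℂ) (g : G) : conjChar χ g = χ g⁻¹ :=
  χ.conj_apply_eq_apply_inv g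

@[simp]
lemma conjChar_conjChar (χ : G →* ℂ) : conjChar (conjChar χ) = χ := by
  ext g
  simp [conjChar]

@[simp]
lemma conjChar_one : conjChar (1 : G →* ℂ) = 1 := by
  ext g
  simp [conjChar]

@[simp]
lemma conjChar_eq_one_iff {χ : G →* ℂ} : conjChar χ = 1 ↔ χ = 1 :=
  ⟨fun h => by rw [← conjChar_conjChar χ, h, conjChar_one], fun h => by rw [h, conjChar_one]⟩

variable [Fintype G]

lemma lift_charIdem (χ ψ : G →* ℂ) :
    MonoidAlgebra.lift ℂ ℂ G ψ (charIdem χ) = if χ = ψ then 1 else 0 := by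
  classical
  have hone : χ * conjChar ψ = 1 ↔ χ = ψ := by
    simp only [MonoidHom.ext_iff, MonoidHom.mul_apply, conjChar_apply, map_inv,
      MonoidHom.one_apply]
    exact forall_congr' fun g => mul_inv_eq_one₀ ((Group.isUnit g).map ψ).ne_zero
  simp only [charIdem, map_smul, map_sum, MonoidAlgebra.lift_single, smul_eq_mul, one_mul,
    ← conjChar_apply]
  rw [← Finset.sum_congr rfl fun σ _ => MonoidHom.mul_apply χ (conjChar ψ) σ, sum_hom_units]
  simp [hone, apply_ite]

lemma lift_eAug (ψ : G →* ℂ) :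
    MonoidAlgebra.lift ℂ ℂ G ψ (eAug G) = if ψ = 1 then 0 else 1 := by
  rw [eAug, map_sub, map_one, lift_charIdem]
  split_ifs <;> simp_all [eq_comm]

end Characters

section LeadingCoeffAtOne

open Polynomial

variable {K : Type} [Field K]

lemma leadingCoeffAtOne_X_sub_one_pow_mul (m : ℕ) {u : K[X]} (hu : u.eval 1 ≠ 0) :
    leadingCoeffAtOne ((X - C 1) ^ m * u) = u.eval 1 := by
  have hu0 : u ≠ 0 := fun h => hu (by rw [h, eval_zero])
  have hmult : ((X - C 1) ^ m * u).rootMultiplicity 1 = m := by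
    rw [rootMultiplicity_mul (mul_ne_zero (pow_ne_zero _ (X_sub_C_ne_zero 1)) hu0),
      rootMultiplicity_X_sub_C_pow, rootMultiplicity_eq_zero hu, add_zero]
  rw [leadingCoeffAtOne, hmult, taylor_mul, taylor_pow, map_sub, taylor_X, taylor_C,
    add_sub_cancel_right, coeff_X_pow_mul', if_pos le_rfl, Nat.sub_self, taylor_coeff_zero]

lemma leadingCoeffAtOne_one_sub_X_sq_pow_mul (h2 : (2 : K) ≠ 0) (m : ℕ) {q : K[X]}
    (hq : q.eval 1 ≠ 0) :
    leadingCoeffAtOne ((1 - X ^ 2) ^ m * q) = (-2) ^ m * q.eval 1 := by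
  have hfactor : (1 - X ^ 2 : K[X]) ^ m * q = (X - C 1) ^ m * ((-(X + 1)) ^ m * q) := by
    rw [← mul_assoc, ← mul_pow, C_1]
    ring
  have heval : ((-(X + 1)) ^ m * q).eval 1 = (-2) ^ m * q.eval 1 := by
    simp only [eval_mul, eval_pow, eval_neg, eval_add, eval_X, eval_one]
    norm_num
  have hne : ((-(X + 1)) ^ m * q).eval 1 ≠ 0 := by
    rw [heval]
    exact mul_ne_zero (pow_ne_zero _ (neg_ne_zero.mpr h2)) hq
  rw [hfactor, leadingCoeffAtOne_X_sub_one_pow_mul m hne, heval]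

end LeadingCoeffAtOne

namespace GaloisCover

variable {Y X : Multigraph} {G : Type} [CommGroup G] [Fintype G] (C : GaloisCover Y X G)
  {s : X.V → Y.V}

lemma lift_thetaStar (s : X.V → Y.V) (ψ : G →* ℂ) :
    MonoidAlgebra.lift ℂ ℂ G ψ (C.thetaStar s) = leadingCoeffAtOne (C.LInv s (conjChar ψ)) := by
  classical
  have hconj (χ : G →* ℂ) : conjChar χ = ψ ↔ χ = conjChar ψ := by
    rw [← conjChar_conjChar ψ, (Function.LeftInverse.injective conjChar_conjChar).eq_iff,
      conjChar_conjChar]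
  simp_rw [thetaStar, finsum_eq_sum_of_fintype, map_sum, map_smul, lift_charIdem, hconj,
    smul_eq_mul, mul_ite, mul_one, mul_zero, Finset.sum_ite_eq', Finset.mem_univ, if_true]

noncomputable def twistedLap (s : X.V → Y.V) (χ : G →* ℂ) : Matrix X.V X.V ℂ :=
  X.degMatrix.map (fun a => (a : ℂ)) - C.Achi s χ

lemma twistedLap_apply (hs : ∀ v, C.vmap (s v) = v) (χ : G →* ℂ) (v v' : X.V) :
    C.twistedLap s χ v v' = ∑ σ, (Y.rho (s v) (C.actV σ (s v')) : ℂ) * χ σ := by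
  classical
  simp only [Multigraph.rho_eq, C.section_eq_actV_section_iff hs, twistedLap, Achi, Asigma,
    Matrix.sub_apply, Matrix.map_apply, Matrix.sum_apply, Matrix.smul_apply, Matrix.of_apply,
    Int.cast_sub, Int.cast_ite, Int.cast_natCast, Int.cast_zero, sub_mul, ite_mul, zero_mul,
    Finset.sum_sub_distrib, smul_eq_mul, mul_comm (χ _), Multigraph.degMatrix,
    Matrix.diagonal_apply, ite_and, C.degree_eq, hs]
  split_ifs <;> simp

lemma lift_lapDet (hs : ∀ v, C.vmap (s v) = v) (ψ : G →* ℂ) :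
    MonoidAlgebra.lift ℤ ℂ G ψ (C.lapDet s) = (C.twistedLap s (conjChar ψ)).det := by
  rw [lapDet, AlgHom.map_det]
  congr 1
  ext v v'
  simp [ell, twistedLap_apply _ hs, conjChar_apply, MonoidAlgebra.lift_single]

lemma det_twistedLap_one [Nonempty X.V] (hs : ∀ v, C.vmap (s v) = v) :
    (C.twistedLap s 1).det = 0 := by
  refine Matrix.exists_mulVec_eq_zero_iff.mp ⟨fun _ => 1, fun h => ?_, ?_⟩
  · exact one_ne_zero (congrFun h (Classical.arbitrary X.V))
  · funext v
    simp only [Matrix.mulVec, dotProduct, twistedLap_apply _ hs, MonoidHom.one_apply, mul_one,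
      Pi.zero_apply]
    rw [C.sum_actV_section hs fun w => (Y.rho (s v) w : ℂ)]
    exact_mod_cast Y.sum_rho (s v)

lemma exists_equivariant_harmonic_lift (hs : ∀ v, C.vmap (s v) = v) {χ : G →* ℂ}
    {x : X.V → ℂ} (hx : (C.twistedLap s χ).mulVec x = 0) :
    ∃ f : Y.V → ℂ, (∀ v σ, f (C.actV σ (s v)) = χ σ * x v) ∧
      ∀ w, ∑ w', (Y.rho w w' : ℂ) * f w' = 0 := by
  let f : Y.V → ℂ := fun w => χ (C.fiberEquiv hs |>.symm w).2 * x (C.fiberEquiv hs |>.symm w).1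
  have hf (v : X.V) (σ : G) : f (C.actV σ (s v)) = χ σ * x v := by
    simp only [f, ← fiberEquiv_apply _ hs, Equiv.symm_apply_apply]
  refine ⟨f, hf, fun w => ?_⟩
  obtain ⟨⟨v, σ⟩, rfl⟩ := (C.fiberEquiv hs).surjective w
  have hrow := congrFun hx v
  simp only [Matrix.mulVec, dotProduct, twistedLap_apply _ hs, Pi.zero_apply] at hrow
  rw [← C.sum_actV_section hs fun w' => (Y.rho _ w' : ℂ) * f w', fiberEquiv_apply]
  calc _ = ∑ v', ∑ τ, (Y.rho (C.actV σ (s v)) (C.actV (σ * τ) (s v')) : ℂ) *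
          f (C.actV (σ * τ) (s v')) :=
        Fintype.sum_congr _ _ fun v' => (Equiv.sum_comp (Equiv.mulLeft σ) _).symm
    _ = χ σ * ∑ v', (∑ τ, (Y.rho (s v) (C.actV τ (s v')) : ℂ) * χ τ) * x v' := by
        simp only [hf]
        simp only [map_mul, Equiv.Perm.mul_apply, rho_act, Finset.mul_sum, Finset.sum_mul]
        exact Fintype.sum_congr _ _ fun v' => Fintype.sum_congr _ _ fun τ => by ring
    _ = 0 := by rw [hrow, mul_zero]

lemma det_twistedLap_ne_zero (hs : ∀ v, C.vmap (s v) = v) (hY : Y.Connected) {χ : G →* ℂ}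
    (hχ : χ ≠ 1) : (C.twistedLap s χ).det ≠ 0 := by
  intro hdet
  obtain ⟨x, hx0, hx⟩ := Matrix.exists_mulVec_eq_zero_iff.mpr hdet
  obtain ⟨f, hf, hharmonic⟩ := C.exists_equivariant_harmonic_lift hs hx
  obtain ⟨τ, hτ⟩ : ∃ τ, χ τ ≠ 1 := by
    by_contra! h
    exact hχ (MonoidHom.ext h)
  refine hx0 (funext fun v => ?_)
  have hτv := Multigraph.eq_of_sum_rho_mul_eq_zero hY hharmonic (C.actV τ (s v)) (C.actV 1 (s v))
  rw [hf, hf, map_one, one_mul] at hτv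
  have h : (χ τ - 1) * x v = 0 := by rw [sub_mul, one_mul, hτv, sub_self]
  exact (mul_eq_zero.mp h).resolve_left (sub_ne_zero.mpr hτ)

lemma leadingCoeffAtOne_LInv {χ : G →* ℂ} (hdet : (C.twistedLap s χ).det ≠ 0) :
    leadingCoeffAtOne (C.LInv s χ) = (-2) ^ (X.r - 1) * (C.twistedLap s χ).det := by
  have heval : ((1 : Matrix X.V X.V (Polynomial ℂ)) -
      (Polynomial.X : Polynomial ℂ) • (C.Achi s χ).map Polynomial.C +
      ((Polynomial.X : Polynomial ℂ) ^ 2) •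
        (X.degMatrix - 1).map fun a => (a : Polynomial ℂ)).det.eval 1 =
      (C.twistedLap s χ).det := by
    rw [← Polynomial.coe_evalRingHom, RingHom.map_det]
    congr 1
    ext v v'
    by_cases h : v = v' <;> simp [twistedLap, h, neg_add_eq_sub]
  rw [LInv, leadingCoeffAtOne_one_sub_X_sq_pow_mul two_ne_zero _ (heval ▸ hdet), heval]

end GaloisCover

theorem equivariant_special_value_general (X Y : Multigraph)
    (hYconn : Y.Connected)
    {G : Type} [CommGroup G] [Fintype G] (C : GaloisCover Y X G)
    (s : X.V → Y.V) (hs : ∀ v, C.vmap (s v) = v) :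
    ∀ g : G, ((((-2 : ℤ) ^ (X.r - 1) • C.lapDet s).coeff g : ℤ) : ℂ) =
      (C.thetaStar s * eAug G).coeff g := by
  have : Nonempty X.V := hYconn.1.map C.vmap
  have hlift (ψ : G →* ℂ) :
      MonoidAlgebra.lift ℤ ℂ G ψ ((-2 : ℤ) ^ (X.r - 1) • C.lapDet s) =
        MonoidAlgebra.lift ℂ ℂ G ψ (C.thetaStar s * eAug G) := by
    rw [map_zsmul, C.lift_lapDet hs, map_mul, C.lift_thetaStar, lift_eAug]
    by_cases hψ : ψ = 1
    · simp [hψ, C.det_twistedLap_one hs]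
    · have hdet := C.det_twistedLap_ne_zero hs hYconn (conjChar_eq_one_iff.not.mpr hψ)
      simp [hψ, C.leadingCoeffAtOne_LInv hdet]
  simpa using MonoidAlgebra.algebraMap_coeff_eq_of_forall_lift_eq hlift

/-- For an abelian cover `Y/X` with automorphism group `G`,
one has `(-2)^(r_X - 1) · det_{ℤ[G]}(φ) = θ*_{Y/X}(1) · e` in `ℂ[G]`
(both sides compared coefficientwise, the left-hand side being the image of an
element of `ℤ[G]`), where `e = 1 - e_{χ₁}`. -/
theorem equivariant_special_value (X Y : Multigraph)
    (hXconn : X.Connected) (hXdeg : X.NoDegreeOne)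
    (hYconn : Y.Connected) (hYdeg : Y.NoDegreeOne)
    {G : Type} [CommGroup G] [Fintype G] (C : GaloisCover Y X G)
    (s : X.V → Y.V) (hs : ∀ v, C.vmap (s v) = v) :
    ∀ g : G, ((((-2 : ℤ) ^ (X.r - 1) • C.lapDet s).coeff g : ℤ) : ℂ) =
      (C.thetaStar s * eAug G).coeff g :=
  equivariant_special_value_general X Y hYconn C s hs
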